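/- arXiv:2403.01563 — 4 statements merged into one kernel-verified Lean document; each statement's English description precedes it below -/
import Mathlib

section
/- For any graph G and any positive integer k, the k-representation number of G equals the k-covering number of G, i.e., θ_k(G) = Φ_k(G). -/
/-!
A family `S : V → Finset (Fin m)` and a family `C : Fin m → Finset V` are the same datum,
an incidence relation between `V` and `Fin m` read by rows or by columns. Under this
transposition `|S_u ∩ S_v|` is the number of members of `C` containing both `u` and `v`,
and for `k ≥ 1` the conditions "at least `k`" and "at most `k - 1`" are complementary, so
`k`-representations of size `m` and `k`-covers of cardinality `m` correspond exactly.
-/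

open Finset

/-- The `k`-representation number: the smallest `m` such that there is a family
`(S_v)` of subsets of a set of size `m` with `|S_u ∩ S_v| ≥ k` iff `uv` is an edge. -/
noncomputable def repNumber {V : Type*} [Fintype V] [DecidableEq V]
    (G : SimpleGraph V) (k : ℕ) : ℕ :=
  sInf {m | ∃ S : V → Finset (Fin m),
    ∀ u v : V, u ≠ v → (k ≤ (S u ∩ S v).card ↔ G.Adj u v)}

/-- The `k`-covering number: the smallest size of a multiset (here, indexed family)
of vertex subsets covering every edge at least `k` times and every non-edge at most
`k - 1` times. -/
noncomputable def coverNumber {V : Type*} [Fintype V] [DecidableEq V]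
    (G : SimpleGraph V) (k : ℕ) : ℕ :=
  sInf {m | ∃ C : Fin m → Finset V,
    (∀ u v : V, G.Adj u v →
      k ≤ (Finset.univ.filter fun i => u ∈ C i ∧ v ∈ C i).card) ∧
    (∀ u v : V, u ≠ v → ¬ G.Adj u v →
      (Finset.univ.filter fun i => u ∈ C i ∧ v ∈ C i).card ≤ k - 1)}

def transposeFamily {α ι : Type*} [Fintype α] [DecidableEq ι] (S : α → Finset ι) :
    ι → Finset α :=
  fun i => univ.filter fun a => i ∈ S a

@[simp]
theorem mem_transposeFamily {α ι : Type*} [Fintype α] [DecidableEq ι] {S : α → Finset ι}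
    {i : ι} {a : α} : a ∈ transposeFamily S i ↔ i ∈ S a := by
  simp [transposeFamily]

@[simp]
theorem transposeFamily_transposeFamily {α ι : Type*} [Fintype α] [Fintype ι] [DecidableEq α]
    [DecidableEq ι] (S : α → Finset ι) : transposeFamily (transposeFamily S) = S := by
  funext a
  ext i
  simp

theorem filter_mem_and_mem_eq_inter_transposeFamily {α ι : Type*} [Fintype ι] [DecidableEq α]
    [DecidableEq ι] (C : ι → Finset α) (u v : α) :
    univ.filter (fun i => u ∈ C i ∧ v ∈ C i) = transposeFamily C u ∩ transposeFamily C v :=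
  filter_and _ _ _

namespace SimpleGraph

variable {V ι : Type*} [Fintype ι] [DecidableEq V] [DecidableEq ι]

def IsKRepresentation (G : SimpleGraph V) (k : ℕ) (S : V → Finset ι) : Prop :=
  ∀ u v : V, u ≠ v → (k ≤ (S u ∩ S v).card ↔ G.Adj u v)

def IsKCover (G : SimpleGraph V) (k : ℕ) (C : ι → Finset V) : Prop :=
  (∀ u v : V, G.Adj u v → k ≤ (univ.filter fun i => u ∈ C i ∧ v ∈ C i).card) ∧
    (∀ u v : V, u ≠ v → ¬ G.Adj u v → (univ.filter fun i => u ∈ C i ∧ v ∈ C i).card ≤ k - 1)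

theorem isKCover_iff_isKRepresentation_transposeFamily (G : SimpleGraph V) {k : ℕ} (hk : 1 ≤ k)
    (C : ι → Finset V) : G.IsKCover k C ↔ G.IsKRepresentation k (transposeFamily C) := by
  simp only [IsKCover, IsKRepresentation, ← filter_mem_and_mem_eq_inter_transposeFamily]
  constructor
  · rintro ⟨hedge, hnonedge⟩ u v huv
    refine ⟨fun hcard => ?_, hedge u v⟩
    by_contra hadj
    have := hnonedge u v huv hadj
    omega
  · intro hrep
    refine ⟨fun u v hadj => (hrep u v hadj.ne).2 hadj, fun u v huv hadj => ?_⟩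
    have := (hrep u v huv).not.2 hadj
    omega

theorem exists_isKRepresentation_iff_exists_isKCover [Fintype V] (G : SimpleGraph V) {k : ℕ}
    (hk : 1 ≤ k) : (∃ S : V → Finset ι, G.IsKRepresentation k S) ↔
      ∃ C : ι → Finset V, G.IsKCover k C := by
  simp only [G.isKCover_iff_isKRepresentation_transposeFamily hk]
  exact ⟨fun ⟨S, hS⟩ => ⟨transposeFamily S, by rwa [transposeFamily_transposeFamily]⟩,
    fun ⟨C, hC⟩ => ⟨transposeFamily C, hC⟩⟩

end SimpleGraph

/-- For any graph `G` and any positive integer `k`, `θ_k(G) = Φ_k(G)`. -/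
theorem repNumber_eq_coverNumber {V : Type*} [Fintype V] [DecidableEq V]
    (G : SimpleGraph V) (k : ℕ) (hk : 1 ≤ k) :
    repNumber G k = coverNumber G k :=
  congrArg sInf (Set.ext fun _ => G.exists_isKRepresentation_iff_exists_isKCover hk)
end

section
/- For all real β with 0 ≤ β ≤ 1/2, the binary entropy function satisfies H(1/2 + β) − 1 ≥ −4β². -/
/-!
Put `t = 2β` and `G(t) = 2 log 2 · t² - (1 + t) log (1 + t) - (1 - t) log (1 - t)`, so that
`G(t) = 2 log 2 · (H((1 + t)/2) - 1 + t²)` and the claim is `G ≥ 0` on `[0, 1]`.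
We have `G(0) = G'(0) = G(1) = 0` and `G''(t) = 4 log 2 - 2 / (1 - t²)` changes sign exactly once,
at `c = √(1 - 1/(2 log 2))`. On `[0, c]` the derivative `G'` increases from `G'(0) = 0`, so `G`
increases from `0`; on `[c, 1]` the function `G` is concave, hence at least `min (G c) (G 1) ≥ 0`.
-/

/-- The binary entropy function `H(p) = -p log₂ p - (1-p) log₂ (1-p)`
(with the convention `log 0 = 0`, so `H(1) = 0`). -/
noncomputable def binH (p : ℝ) : ℝ :=
  -(p * Real.logb 2 p) - (1 - p) * Real.logb 2 (1 - p)

open Real Set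

theorem nonneg_of_monotoneOn_of_concaveOn {f : ℝ → ℝ} {a b c x : ℝ} (hac : a ≤ c)
    (hmono : MonotoneOn f (Icc a c)) (hconc : ConcaveOn ℝ (Icc c b) f)
    (ha : 0 ≤ f a) (hb : 0 ≤ f b) (hx : x ∈ Icc a b) : 0 ≤ f x := by
  have hfc : f a ≤ f c := hmono ⟨le_rfl, hac⟩ ⟨hac, le_rfl⟩ hac
  rcases le_total x c with hxc | hcx
  · exact ha.trans (hmono ⟨le_rfl, hac⟩ ⟨hx.1, hxc⟩ hx.1)
  · have hcb : c ≤ b := hcx.trans hx.2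
    exact (le_min (ha.trans hfc) hb).trans
      (hconc.min_le_of_mem_Icc ⟨le_rfl, hcb⟩ ⟨hcb, le_rfl⟩ ⟨hcx, hx.2⟩)

theorem mul_log_div_two (x : ℝ) : x / 2 * log (x / 2) = (x * log x - x * log 2) / 2 := by
  rcases eq_or_ne x 0 with rfl | hx
  · simp
  · rw [log_div hx two_ne_zero]
    ring

noncomputable def entropyGap (t : ℝ) : ℝ :=
  2 * log 2 * t ^ 2 - (1 + t) * log (1 + t) - (1 - t) * log (1 - t)

theorem entropyGap_eq (t : ℝ) : entropyGap t = 2 * log 2 * (binH ((1 + t) / 2) - 1 + t ^ 2) := by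
  have hlog2 : log 2 ≠ 0 := (log_pos one_lt_two).ne'
  rw [binH, logb, logb, show 1 - (1 + t) / 2 = (1 - t) / 2 by ring, mul_div_assoc',
    mul_div_assoc', mul_log_div_two, mul_log_div_two, entropyGap]
  field_simp
  ring

noncomputable def entropyGapDeriv (t : ℝ) : ℝ :=
  4 * log 2 * t - log (1 + t) + log (1 - t)

noncomputable def entropyGapDeriv2 (t : ℝ) : ℝ :=
  4 * log 2 - 2 / (1 - t ^ 2)

theorem hasDerivAt_entropyGap {t : ℝ} (ht₀ : -1 < t) (ht₁ : t < 1) :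
    HasDerivAt entropyGap (entropyGapDeriv t) t := by
  have hplus := (hasDerivAt_mul_log (by linarith : 1 + t ≠ 0)).comp t
    ((hasDerivAt_id' t).const_add 1)
  have hminus := (hasDerivAt_mul_log (by linarith : 1 - t ≠ 0)).comp t
    ((hasDerivAt_id' t).const_sub 1)
  have hsq := (hasDerivAt_pow 2 t).const_mul (2 * log 2)
  refine ((hsq.sub hplus).sub hminus).congr_deriv ?_
  simp only [entropyGapDeriv]
  ring

theorem hasDerivAt_entropyGapDeriv {t : ℝ} (ht₀ : -1 < t) (ht₁ : t < 1) :
    HasDerivAt entropyGapDeriv (entropyGapDeriv2 t) t := by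
  have h₁ : 1 + t ≠ 0 := by linarith
  have h₂ : 1 - t ≠ 0 := by linarith
  have hplus := ((hasDerivAt_id' t).const_add 1).log h₁
  have hminus := ((hasDerivAt_id' t).const_sub 1).log h₂
  have hlin := (hasDerivAt_id' t).const_mul (4 * log 2)
  refine ((hlin.sub hplus).add hminus).congr_deriv ?_
  have h₃ : 1 - t ^ 2 ≠ 0 := by nlinarith
  simp only [entropyGapDeriv2]
  field_simp
  ring

theorem continuous_entropyGap : Continuous entropyGap := by
  unfold entropyGap
  have hplus := continuous_mul_log.comp (continuous_const_add (1 : ℝ))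
  have hminus := continuous_mul_log.comp
    (continuous_const.sub continuous_id : Continuous fun s : ℝ ↦ 1 - s)
  exact ((continuous_const.mul (continuous_pow 2)).sub hplus).sub hminus

noncomputable def entropyGapInflection : ℝ :=
  √(1 - 1 / (2 * log 2))

theorem one_sub_entropyGapInflection_sq :
    1 - entropyGapInflection ^ 2 = 1 / (2 * log 2) := by
  have : 1 / (2 * log 2) < 1 := by
    rw [div_lt_one (by positivity)]
    linarith [log_two_gt_d9]
  rw [entropyGapInflection, sq_sqrt (by linarith)]
  ring

theorem entropyGapInflection_lt_one : entropyGapInflection < 1 := by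
  have h := one_sub_entropyGapInflection_sq
  have : 0 < 1 / (2 * log 2) := by positivity
  nlinarith [sqrt_nonneg (1 - 1 / (2 * log 2))]

theorem entropyGapDeriv2_nonneg {t : ℝ} (ht₀ : 0 ≤ t) (ht : t ≤ entropyGapInflection) :
    0 ≤ entropyGapDeriv2 t := by
  have hc := one_sub_entropyGapInflection_sq
  have hc1 := entropyGapInflection_lt_one
  have hpos : 0 < 1 - t ^ 2 := by nlinarith
  have hle : 1 / (2 * log 2) ≤ 1 - t ^ 2 := by nlinarith
  rw [entropyGapDeriv2, sub_nonneg, div_le_iff₀ hpos]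
  rw [div_le_iff₀ (by positivity)] at hle
  linarith

theorem entropyGapDeriv2_nonpos {t : ℝ} (ht : entropyGapInflection ≤ t) (ht₁ : t < 1) :
    entropyGapDeriv2 t ≤ 0 := by
  have hc := one_sub_entropyGapInflection_sq
  have hc0 : 0 ≤ entropyGapInflection := sqrt_nonneg _
  have hpos : 0 < 1 - t ^ 2 := by nlinarith
  have hle : 1 - t ^ 2 ≤ 1 / (2 * log 2) := by nlinarith
  rw [entropyGapDeriv2, sub_nonpos, le_div_iff₀ hpos]
  rw [le_div_iff₀ (by positivity)] at hle
  linarith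

theorem entropyGapDeriv_nonneg {t : ℝ} (ht₀ : 0 ≤ t) (ht : t ≤ entropyGapInflection) :
    0 ≤ entropyGapDeriv t := by
  have hc1 := entropyGapInflection_lt_one
  have hmono : MonotoneOn entropyGapDeriv (Icc 0 entropyGapInflection) := by
    refine monotoneOn_of_hasDerivWithinAt_nonneg (convex_Icc _ _) (f' := entropyGapDeriv2)
      (fun x hx ↦ (hasDerivAt_entropyGapDeriv (by linarith [hx.1]) (by linarith [hx.2])
        ).continuousAt.continuousWithinAt) (fun x hx ↦ ?_) (fun x hx ↦ ?_) <;>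
      rw [interior_Icc] at hx
    · exact (hasDerivAt_entropyGapDeriv (by linarith [hx.1]) (by linarith [hx.2])
        ).hasDerivWithinAt
    · exact entropyGapDeriv2_nonneg hx.1.le hx.2.le
  simpa [entropyGapDeriv] using hmono ⟨le_rfl, ht₀.trans ht⟩ ⟨ht₀, ht⟩ ht₀

theorem monotoneOn_entropyGap : MonotoneOn entropyGap (Icc 0 entropyGapInflection) := by
  have hc1 := entropyGapInflection_lt_one
  refine monotoneOn_of_hasDerivWithinAt_nonneg (convex_Icc _ _) (f' := entropyGapDeriv)
    continuous_entropyGap.continuousOn (fun x hx ↦ ?_) (fun x hx ↦ ?_) <;>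
    rw [interior_Icc] at hx
  · exact (hasDerivAt_entropyGap (by linarith [hx.1]) (by linarith [hx.2])).hasDerivWithinAt
  · exact entropyGapDeriv_nonneg hx.1.le hx.2.le

theorem concaveOn_entropyGap : ConcaveOn ℝ (Icc entropyGapInflection 1) entropyGap := by
  have hc0 : 0 ≤ entropyGapInflection := sqrt_nonneg _
  refine concaveOn_of_hasDerivWithinAt2_nonpos (convex_Icc _ _) (f' := entropyGapDeriv)
    (f'' := entropyGapDeriv2) continuous_entropyGap.continuousOn (fun x hx ↦ ?_)
    (fun x hx ↦ ?_) (fun x hx ↦ ?_) <;> rw [interior_Icc] at hx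
  · exact (hasDerivAt_entropyGap (by linarith [hx.1]) hx.2).hasDerivWithinAt
  · exact (hasDerivAt_entropyGapDeriv (by linarith [hx.1]) hx.2).hasDerivWithinAt
  · exact entropyGapDeriv2_nonpos hx.1.le hx.2

theorem entropyGap_nonneg {t : ℝ} (ht₀ : 0 ≤ t) (ht₁ : t ≤ 1) : 0 ≤ entropyGap t :=
  nonneg_of_monotoneOn_of_concaveOn (sqrt_nonneg _) monotoneOn_entropyGap concaveOn_entropyGap
    (by simp [entropyGap]) (by norm_num [entropyGap]) ⟨ht₀, ht₁⟩

/-- For all `0 ≤ β ≤ 1/2`, `H(1/2 + β) − 1 ≥ −4β²`. -/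
theorem binH_half_add_ge (β : ℝ) (h0 : 0 ≤ β) (h1 : β ≤ 1 / 2) :
    binH (1 / 2 + β) - 1 ≥ -4 * β ^ 2 := by
  have hgap := entropyGap_nonneg (t := 2 * β) (by linarith) (by linarith)
  rw [entropyGap_eq, show (1 + 2 * β) / 2 = 1 / 2 + β by ring,
    mul_nonneg_iff_of_pos_left (by positivity)] at hgap
  linarith
end

section
/- There is an absolute constant c₁ > 0 such that for all integers k ≥ 2 and n ≥ 2: if A = {(x_i, w_i) : i ∈ [m]} satisfies x_i > 0, 0 ≤ w_i ≤ 1, Σ_i w_i(x_i³ − x_i⁴/(8k−2)) ≥ 0, and Σ_i w_i(x_i³ + x_i⁴/2) ≥ k·n²/(3·(9 log n)²), then Σ_i w_i ≥ c₁·n²/(k³·(log n)²). -/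
/-!
Adding `8k - 2` times the constraint `Σ wᵢ (xᵢ³ - xᵢ⁴/(8k-2)) ≥ 0` to `Σ wᵢ (xᵢ³ + xᵢ⁴/2)` turns each
summand into `wᵢ ((8k-1) xᵢ³ - xᵢ⁴/2)`, and this quartic in `xᵢ` is at most `(27/32)(8k-1)⁴`
(attained at `xᵢ = 3(8k-1)/2`). Hence `Σ wᵢ (xᵢ³ + xᵢ⁴/2) = O(k⁴ Σ wᵢ)`, and the assumed lower bound
`k n²/(243 (log n)²)` on the left gives `Σ wᵢ = Ω(n²/(k³ (log n)²))`.
-/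

open Finset

theorem mul_pow_three_sub_pow_four_div_two_le (b y : ℝ) :
    b * y ^ 3 - y ^ 4 / 2 ≤ 27 / 32 * b ^ 4 := by
  have factorization : 27 / 32 * b ^ 4 - (b * y ^ 3 - y ^ 4 / 2)
      = (y - 3 * b / 2) ^ 2 * ((y + b / 2) ^ 2 + b ^ 2 / 2) / 2 := by ring
  linarith [factorization, mul_nonneg (sq_nonneg (y - 3 * b / 2))
    (add_nonneg (sq_nonneg (y + b / 2)) (div_nonneg (sq_nonneg b) zero_le_two))]

theorem sum_mul_pow_three_add_pow_four_div_two_le {ι : Type*} (s : Finset ι) (w y : ι → ℝ)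
    {a : ℝ} (ha : 0 < a) (hw : ∀ i ∈ s, 0 ≤ w i)
    (h : 0 ≤ ∑ i ∈ s, w i * (y i ^ 3 - y i ^ 4 / a)) :
    ∑ i ∈ s, w i * (y i ^ 3 + y i ^ 4 / 2) ≤ 27 / 32 * (a + 1) ^ 4 * ∑ i ∈ s, w i := calc
  ∑ i ∈ s, w i * (y i ^ 3 + y i ^ 4 / 2)
      ≤ ∑ i ∈ s, w i * (y i ^ 3 + y i ^ 4 / 2) + a * ∑ i ∈ s, w i * (y i ^ 3 - y i ^ 4 / a) :=
    le_add_of_nonneg_right (mul_nonneg ha.le h)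
  _ = ∑ i ∈ s, w i * ((a + 1) * y i ^ 3 - y i ^ 4 / 2) := by
    rw [mul_sum, ← sum_add_distrib]
    refine sum_congr rfl fun i _ => ?_
    field_simp
    ring
  _ ≤ ∑ i ∈ s, w i * (27 / 32 * (a + 1) ^ 4) :=
    sum_le_sum fun i hi =>
      mul_le_mul_of_nonneg_left (mul_pow_three_sub_pow_four_div_two_le _ _) (hw i hi)
  _ = 27 / 32 * (a + 1) ^ 4 * ∑ i ∈ s, w i := by rw [← sum_mul, mul_comm]

/-- Lower bound for the weight of any `k`-fractional pseudocover: there is an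
absolute constant `c₁ > 0` such that `Σ w_i ≥ c₁ n²/(k³ (log n)²)`. -/
theorem fpc_weight_lower_bound :
    ∃ c₁ : ℝ, 0 < c₁ ∧ ∀ (k n m : ℕ), 2 ≤ k → 2 ≤ n →
      ∀ x w : Fin m → ℝ,
        (∀ i, 0 < x i) → (∀ i, 0 ≤ w i ∧ w i ≤ 1) →
        (0 ≤ ∑ i, w i * (x i ^ 3 - x i ^ 4 / (8 * (k : ℝ) - 2))) →
        ((k : ℝ) * (n : ℝ) ^ 2 / (3 * (9 * Real.log n) ^ 2)
            ≤ ∑ i, w i * (x i ^ 3 + x i ^ 4 / 2)) →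
        c₁ * (n : ℝ) ^ 2 / ((k : ℝ) ^ 3 * (Real.log n) ^ 2) ≤ ∑ i, w i := by
  -- `839808 = 3 · 9² · (27/32) · 8⁴`
  refine ⟨1 / 839808, by norm_num, fun k n m hk hn x w _ hw hP1 hP2 => ?_⟩
  have hk : (2 : ℝ) ≤ k := by exact_mod_cast hk
  have hlog : 0 < Real.log n := Real.log_pos (by exact_mod_cast hn)
  have hW : 0 ≤ ∑ i, w i := sum_nonneg fun i _ => (hw i).1
  have hupper := sum_mul_pow_three_add_pow_four_div_two_le univ w x (by linarith)
    (fun i _ => (hw i).1) hP1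
  have hpow : (8 * (k : ℝ) - 2 + 1) ^ 4 ≤ 4096 * (k : ℝ) ^ 4 := by
    calc (8 * (k : ℝ) - 2 + 1) ^ 4 ≤ (8 * (k : ℝ)) ^ 4 := by gcongr <;> linarith
      _ = 4096 * (k : ℝ) ^ 4 := by ring
  have key : (k : ℝ) * n ^ 2 ≤ 839808 * (k : ℝ) ^ 4 * (Real.log n) ^ 2 * ∑ i, w i := by
    have := hP2.trans hupper
    rw [div_le_iff₀ (by positivity)] at this
    linarith [mul_le_mul_of_nonneg_right hpow (mul_nonneg hW (sq_nonneg (Real.log n)))]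
  rw [div_le_iff₀ (by positivity)]
  refine le_of_mul_le_mul_left ?_ (by positivity : (0 : ℝ) < 839808 * k)
  calc 839808 * (k : ℝ) * (1 / 839808 * n ^ 2) = k * n ^ 2 := by ring
    _ ≤ 839808 * k ^ 4 * (Real.log n) ^ 2 * ∑ i, w i := key
    _ = 839808 * k * ((∑ i, w i) * (k ^ 3 * Real.log n ^ 2)) := by ring
end

section
/- Let G be a graph on n vertices satisfying: for every vertex subset X, e(X) = (1/2 ± 2√(log n / |X|))·C(|X|,2). Let k ≥ 2 and let C = {C_1,…,C_m} be a k-cover of G in which every C_i satisfies |C_i| ≤ 9k²·log n. Then, for sufficiently large n, m ≥ n²/(6·k³·(9 log n)²). -/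
open Finset
open scoped Classical

/-- The number of edges of `G` induced by the vertex subset `X`. -/
noncomputable def inducedEdges {n : ℕ} (G : SimpleGraph (Fin n)) (X : Finset (Fin n)) : ℕ :=
  ((Set.toFinite G.edgeSet).toFinset.filter fun e => ∀ v ∈ e, v ∈ X).card

/-!
Double counting the pairs (edge, set of the cover containing it) gives
`k · e(G) ≤ ∑ᵢ e(Cᵢ) ≤ m · (9k² log n)² / 2`, since a set of size `s` spans at most `s² / 2`
edges. Applying the pseudorandomness hypothesis to `X = V(G)` and using `log n / n → 0` gives
`e(G) ≥ n² / 12` for large `n`, and the bound on `m` follows.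
-/

open Filter Topology

theorem tendsto_log_div_self_atTop : Tendsto (fun x : ℝ => Real.log x / x) atTop (𝓝 0) := by
  simpa using Real.tendsto_pow_log_div_mul_add_atTop 1 0 1 one_ne_zero

theorem eventually_two_mul_sqrt_log_div_lt_quarter :
    ∀ᶠ n : ℕ in atTop, 2 * √(Real.log n / n) < 1 / 4 := by
  have h : Tendsto (fun n : ℕ => 2 * √(Real.log n / n)) atTop (𝓝 (2 * √0)) :=
    ((tendsto_log_div_self_atTop.comp tendsto_natCast_atTop_atTop).sqrt).const_mul 2
  exact h.eventually_lt_const (by norm_num)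

theorem inducedEdges_le_choose_two {n : ℕ} (G : SimpleGraph (Fin n)) (X : Finset (Fin n)) :
    inducedEdges G X ≤ (#X).choose 2 := by
  rw [← Sym2.card_image_offDiag]
  refine card_le_card fun e he => ?_
  simp only [mem_filter, Set.Finite.mem_toFinset] at he
  obtain ⟨hadj, hX⟩ := he
  induction e using Sym2.ind with
  | h u v =>
    exact mem_image.2 ⟨(u, v), mem_offDiag.2 ⟨hX u (Sym2.mem_mk_left u v),
      hX v (Sym2.mem_mk_right u v), G.ne_of_adj hadj⟩, rfl⟩

theorem mul_inducedEdges_univ_le_sum {n : ℕ} {ι : Type*} [Fintype ι] (G : SimpleGraph (Fin n))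
    (C : ι → Finset (Fin n)) (k : ℕ)
    (hcov : ∀ u v, G.Adj u v → k ≤ #{i | u ∈ C i ∧ v ∈ C i}) :
    k * inducedEdges G univ ≤ ∑ i, inducedEdges G (C i) := by
  set E := (Set.toFinite G.edgeSet).toFinset
  have hE : inducedEdges G univ = #E := by simp [inducedEdges, E]
  have hcovE : ∀ e ∈ E, k ≤ #(univ.bipartiteAbove (fun e i => ∀ v ∈ e, v ∈ C i) e) := by
    intro e he
    induction e using Sym2.ind with
    | h u v =>
      refine (hcov u v (by simpa [E] using he)).trans (card_le_card fun i hi => ?_)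
      simp only [bipartiteAbove, mem_filter, mem_univ, true_and, Sym2.mem_iff] at hi ⊢
      rintro w (rfl | rfl) <;> simp [hi]
  calc k * inducedEdges G univ = ∑ _e ∈ E, k := by rw [hE, sum_const, smul_eq_mul, mul_comm]
    _ ≤ ∑ e ∈ E, #(univ.bipartiteAbove (fun e i => ∀ v ∈ e, v ∈ C i) e) := sum_le_sum hcovE
    _ = ∑ i, inducedEdges G (C i) := sum_card_bipartiteAbove_eq_sum_card_bipartiteBelow _

theorem sum_inducedEdges_le {n : ℕ} {ι : Type*} [Fintype ι] (G : SimpleGraph (Fin n))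
    (C : ι → Finset (Fin n)) {s : ℝ} (hC : ∀ i, (#(C i) : ℝ) ≤ s) :
    ∑ i, (inducedEdges G (C i) : ℝ) ≤ Fintype.card ι * (s ^ 2 / 2) := by
  rw [← nsmul_eq_mul, ← card_univ, ← sum_const]
  refine sum_le_sum fun i _ => ?_
  have hsq : (#(C i) : ℝ) ^ 2 ≤ s ^ 2 := pow_le_pow_left₀ (Nat.cast_nonneg _) (hC i) 2
  calc (inducedEdges G (C i) : ℝ) ≤ (#(C i)).choose 2 := by
        exact_mod_cast inducedEdges_le_choose_two G (C i)
    _ ≤ s ^ 2 / 2 := by rw [Nat.cast_choose_two]; nlinarith [(#(C i)).cast_nonneg (α := ℝ)]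

theorem sq_le_twelve_mul_of_abs_sub_half_choose_two_le {n : ℕ} (hn : 3 ≤ n) {E δ : ℝ}
    (hδ : δ ≤ 1 / 4) (h : |E - 1 / 2 * (n.choose 2 : ℝ)| ≤ δ * (n.choose 2 : ℝ)) :
    (n : ℝ) ^ 2 ≤ 12 * E := by
  have hn' : (3 : ℝ) ≤ n := by exact_mod_cast hn
  rw [Nat.cast_choose_two] at h
  have hc : 0 ≤ (n : ℝ) * (n - 1) / 2 := by nlinarith
  nlinarith [neg_le_of_abs_le h, mul_le_mul_of_nonneg_right hδ hc]

/-- If `G` on `n` vertices is pseudorandom (every subset `X` induces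
`(1/2 ± 2√(log n/|X|)) C(|X|,2)` edges) and `C` is a `k`-cover of `G` all of whose
members have size at most `9 k² log n`, then, for sufficiently large `n`,
`m ≥ n²/(6 k³ (9 log n)²)`. -/
theorem kCover_small_sets_lower_bound :
    ∃ N : ℕ, ∀ n : ℕ, N ≤ n → ∀ (G : SimpleGraph (Fin n)) (k m : ℕ), 2 ≤ k →
      (∀ X : Finset (Fin n),
        |(inducedEdges G X : ℝ) - (1 / 2) * (X.card.choose 2 : ℝ)| ≤
          2 * Real.sqrt (Real.log n / X.card) * (X.card.choose 2 : ℝ)) →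
      ∀ C : Fin m → Finset (Fin n),
        (∀ u v : Fin n, G.Adj u v →
          k ≤ (Finset.univ.filter fun i => u ∈ C i ∧ v ∈ C i).card) →
        (∀ u v : Fin n, u ≠ v → ¬ G.Adj u v →
          (Finset.univ.filter fun i => u ∈ C i ∧ v ∈ C i).card ≤ k - 1) →
        (∀ i, ((C i).card : ℝ) ≤ 9 * (k : ℝ) ^ 2 * Real.log n) →
        (n : ℝ) ^ 2 / (6 * (k : ℝ) ^ 3 * (9 * Real.log n) ^ 2) ≤ (m : ℝ) := by
  obtain ⟨N, hN⟩ := eventually_atTop.1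
    ((eventually_ge_atTop 3).and eventually_two_mul_sqrt_log_div_lt_quarter)
  refine ⟨N, fun n hn G k m hk hpr C hcov _ hsize => ?_⟩
  obtain ⟨hn3, hδ⟩ := hN n hn
  have hedges : (n : ℝ) ^ 2 ≤ 12 * inducedEdges G univ :=
    sq_le_twelve_mul_of_abs_sub_half_choose_two_le hn3 hδ.le (by simpa using hpr univ)
  have hcount : (k : ℝ) * inducedEdges G univ ≤ ∑ i, (inducedEdges G (C i) : ℝ) := by
    exact_mod_cast mul_inducedEdges_univ_le_sum G C k hcov
  have hsum := sum_inducedEdges_le G C hsize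
  rw [Fintype.card_fin] at hsum
  have hk0 : (0 : ℝ) < k := by exact_mod_cast (by omega : 0 < k)
  have hL : 0 < Real.log n := Real.log_pos (by exact_mod_cast (by omega : 1 < n))
  rw [div_le_iff₀ (by positivity)]
  refine le_of_mul_le_mul_left ?_ hk0
  calc (k : ℝ) * n ^ 2 ≤ 12 * (k * inducedEdges G univ) := by nlinarith
    _ ≤ 12 * (m * ((9 * k ^ 2 * Real.log n) ^ 2 / 2)) := by linarith
    _ = k * (m * (6 * k ^ 3 * (9 * Real.log n) ^ 2)) := by ring
end
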